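/- Under the bracket [x₁,…,x_n]_φ = ∑_{i<j}(−1)^{i+j+1} φ(x₁,…,x̂_i,…,x̂_j,…,x_n)[x_i,x_j] induced by an alternating (n−2)-form φ on a multiplicative Hom-Lie algebra (g, [·,·], α) with φ∘(α⊗id⊗…⊗id) = φ, the map α is multiplicative for the n-ary bracket: α([x₁,…,x_n]_φ) = [α(x₁),…,α(x_n)]_φ for all x₁,…,x_n ∈ g. -/
import Mathlib


/-- The n-ary product induced by an (n−2)-form φ on (g,[·,·]). -/
noncomputable def phiBracket {K g : Type*} [Field K] [AddCommGroup g] [Module K g]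
    (m : ℕ) (φ : (Fin m → g) → K) (b : g →ₗ[K] g →ₗ[K] g)
    (x : Fin (m + 2) → g) : g :=
  ∑ i : Fin (m + 2), ∑ j : Fin (m + 2),
    if h : i < j then
      ((-1 : K) ^ (i.val + j.val + 1) *
        φ (fun t => x (j.succAbove ((⟨i.val, by
            have h1 := Fin.lt_def.mp h
            have h2 := j.isLt
            omega⟩ : Fin (m + 1)).succAbove t)))) • b (x i) (x j)
    else 0

/-- for a multiplicative Hom-Lie algebra (g,[·,·],α) and an
α-invariant alternating (n−2)-form φ, the map α is multiplicative for the
induced n-ary bracket: α([x₁,…,x_n]_φ) = [α(x₁),…,α(x_n)]_φ. -/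
theorem phiBracket_alpha_multiplicative {K g : Type*} [Field K] [CharZero K]
    [AddCommGroup g] [Module K g]
    (m : ℕ) (φ : AlternatingMap K g K (Fin m)) (b : g →ₗ[K] g →ₗ[K] g) (α : g →ₗ[K] g)
    (hskew : ∀ x y, b x y = - b y x)
    (hJac : ∀ x y z : g, b (α x) (b y z) + b (α y) (b z x) + b (α z) (b x y) = 0)
    (hmult : ∀ x y, α (b x y) = b (α x) (α y))
    (hφα : ∀ x : Fin m → g, φ (fun i => α (x i)) = φ x) :
    ∀ x : Fin (m + 2) → g,
      α (phiBracket m (⇑φ) b x) = phiBracket m (⇑φ) b (fun i => α (x i)) := by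
  intro x
  unfold phiBracket
  rw [map_sum]
  refine Finset.sum_congr rfl fun i _ => ?_
  rw [map_sum]
  refine Finset.sum_congr rfl fun j _ => ?_
  split
  · rw [map_smul, hmult, ← hφα]
  · simp
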